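/- For v ∈ (0,1), the Kasner map K₁(φ) = π - 2·arctan(((1+v)/(1-v))·tan(φ/2)) is an involution up to symmetry in the sense that cos(K₁(φ)) = (2v - (1+v²)cos φ)/(v² + 1 - 2v·cos φ) for all φ ∈ (-π, π). -/
import Mathlib


open Real

lemma cos_two_arctan (x : ℝ) :
    Real.cos (2 * Real.arctan x) = (1 - x ^ 2) / (1 + x ^ 2) := by
  have h : (0:ℝ) < 1 + x ^ 2 := by positivity
  rw [Real.cos_two_mul, Real.cos_arctan]
  rw [div_pow, one_pow, Real.sq_sqrt h.le]
  field_simp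
  ring

/-- For `v ∈ (0,1)` and all `φ ∈ (-π, π)`, the Kasner map
`K₁(φ) = π - 2·arctan(((1+v)/(1-v))·tan(φ/2))` satisfies
`cos (K₁ φ) = (2v - (1+v²) cos φ) / (v² + 1 - 2v cos φ)`. -/
theorem kasner_map_cos_formula (v : ℝ) (hv : v ∈ Set.Ioo (0:ℝ) 1)
    (φ : ℝ) (hφ : φ ∈ Set.Ioo (-π) π) :
    Real.cos (π - 2 * Real.arctan ((1 + v) / (1 - v) * Real.tan (φ / 2)))
      = (2 * v - (1 + v ^ 2) * Real.cos φ) / (v ^ 2 + 1 - 2 * v * Real.cos φ) := by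
  obtain ⟨hv0, hv1⟩ := hv
  obtain ⟨hφ1, hφ2⟩ := hφ
  have hvne : (1 : ℝ) - v ≠ 0 := by linarith
  have hc : 0 < Real.cos (φ / 2) := by
    apply Real.cos_pos_of_mem_Ioo
    constructor <;> [linarith; linarith]
  set t := Real.tan (φ / 2) with ht
  have h1t : (0:ℝ) < 1 + t ^ 2 := by positivity
  have hcos : Real.cos φ = (1 - t ^ 2) / (1 + t ^ 2) := by
    have hsc : Real.sin (φ/2) ^ 2 + Real.cos (φ/2) ^ 2 = 1 := Real.sin_sq_add_cos_sq _
    have hφ2 : φ = 2 * (φ / 2) := by ring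
    rw [hφ2, Real.cos_two_mul, ht, Real.tan_eq_sin_div_cos]
    field_simp
    nlinarith [hsc]
  rw [Real.cos_pi_sub, cos_two_arctan, hcos]
  have hden : (0:ℝ) < v ^ 2 + 1 - 2 * v * ((1 - t ^ 2) / (1 + t ^ 2)) := by
    rw [sub_pos, ← mul_div_assoc, div_lt_iff₀ h1t]
    nlinarith
  have hx : (0:ℝ) < 1 + ((1 + v) / (1 - v) * t) ^ 2 := by positivity
  rw [← neg_div, div_eq_div_iff (by positivity) hden.ne']
  field_simp
  ring
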